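/- For integers 2 ≤ a ≤ b, and the complete hypersurface R = ℂ[[x,y]]/(x^a − y^b), the jacobian ideal J = (x^{a−1}, y^{b−1})R satisfies J^a = x^{a−1}·J^{a−1}, i.e., the parameter ideal Q = (x^{a−1}) is a reduction of J; consequently the Hilbert–Samuel multiplicity e(J) equals (a−1)b. -/

import Mathlib

/-!
Write `p = x^(a-1)`, `q = y^(b-1)` and `J = (p, q) = (p) ⊔ (q)`. Expanding `J^a`, every term other
than `q^a` already lies in `p·J^(a-1)`, and since `x^a = y^b` in `R`,
`q^a = y^(b(a-1)) · y^(b-a) = (x^a)^(a-1) · y^(b-a) = p · p^(a-1) · y^(b-a) ∈ p·J^(a-1)`.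

For the length, `R/Q ≅ ℂ[[x,y]]/(x^(a-1), y^b)`, on which the coefficients of `x^i y^j` with
`i < a-1`, `j < b` give a `ℂ`-linear isomorphism onto `ℂ^((a-1)b)`. As `R` is local with residue
field `ℂ`, every composition factor of an `R`-module is one-dimensional over `ℂ`, so the length of
`R/Q` over `R` equals its `ℂ`-dimension.
-/

open MvPowerSeries

/-- The hypersurface `R = ℂ[[x,y]]/(x^a − y^b)`. -/
abbrev HypSurf (a b : ℕ) : Type :=
  MvPowerSeries (Fin 2) ℂ ⧸
    Ideal.span {(X 0 : MvPowerSeries (Fin 2) ℂ) ^ a - (X 1 : MvPowerSeries (Fin 2) ℂ) ^ b}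

namespace Ideal

section CommSemiring

variable {R : Type*} [CommSemiring R]

theorem sup_pow_succ_le_mul_pow_sup_pow (I K : Ideal R) (m : ℕ) :
    (I ⊔ K) ^ (m + 1) ≤ I * (I ⊔ K) ^ m ⊔ K ^ (m + 1) := by
  induction m with
  | zero => simp
  | succ m ih =>
    calc (I ⊔ K) ^ (m + 2) = (I ⊔ K) ^ (m + 1) * (I ⊔ K) := pow_succ _ _
      _ ≤ (I * (I ⊔ K) ^ m ⊔ K ^ (m + 1)) * (I ⊔ K) := mul_mono_left ih
      _ = I * (I ⊔ K) ^ (m + 1) ⊔ (K ^ (m + 1) * I ⊔ K ^ (m + 2)) := by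
        rw [sup_mul, mul_sup (K ^ (m + 1)), mul_assoc, ← pow_succ, ← pow_succ]
      _ ≤ I * (I ⊔ K) ^ (m + 1) ⊔ K ^ (m + 2) := by
        refine sup_le le_sup_left (sup_le_sup_right ?_ _)
        rw [Ideal.mul_comm]
        exact mul_mono_right (Ideal.pow_right_mono le_sup_right _)

theorem span_pair_pow_eq_span_singleton_mul {p q : R} {n : ℕ} (hn : n ≠ 0)
    (h : q ^ n ∈ span {p} * span {p, q} ^ (n - 1)) :
    span {p, q} ^ n = span {p} * span {p, q} ^ (n - 1) := by
  obtain ⟨m, rfl⟩ := Nat.exists_eq_succ_of_ne_zero hn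
  rw [Nat.succ_sub_one]
  refine le_antisymm ?_ ?_
  · rw [span_insert]
    refine (sup_pow_succ_le_mul_pow_sup_pow _ _ m).trans (sup_le le_rfl ?_)
    rwa [span_singleton_pow, span_le, Set.singleton_subset_iff, ← span_insert]
  · rw [pow_succ']
    exact mul_mono_left (span_mono (by simp))

end CommSemiring

theorem span_pow_sub_pow_sup_span_pow_pred {R : Type*} [CommRing R] {x y : R} {a b : ℕ}
    (ha : a ≠ 0) :
    span {x ^ a - y ^ b} ⊔ span {x ^ (a - 1)} = span {x ^ (a - 1), y ^ b} := by
  have hsplit : x ^ a - y ^ b = -y ^ b + x * x ^ (a - 1) := by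
    rw [← pow_succ', Nat.sub_add_cancel (Nat.one_le_iff_ne_zero.mpr ha)]; ring
  rw [← span_insert, hsplit, span_pair_add_mul_right, span_insert_neg, span_pair_comm]

end Ideal

theorem pow_pred_pow_eq_mul_of_pow_eq {R : Type*} [CommMonoid R] {x y : R} {a b : ℕ}
    (h : x ^ a = y ^ b) (hab : a ≤ b) :
    (y ^ (b - 1)) ^ a = x ^ (a - 1) * ((x ^ (a - 1)) ^ (a - 1) * y ^ (b - a)) := by
  rcases Nat.eq_zero_or_pos a with rfl | ha
  · simpa using h
  calc (y ^ (b - 1)) ^ a = (y ^ b) ^ (a - 1) * y ^ (b - a) := by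
        rw [← pow_mul, ← pow_mul, ← pow_add]
        congr 1
        zify [ha, hab, ha.trans_le hab]
        ring
    _ = _ := by
        rw [← h, ← mul_assoc, ← pow_succ', Nat.sub_add_cancel ha, ← pow_mul, ← pow_mul,
          mul_comm a]

instance IsLocalRing.instQuotient {A : Type*} [CommRing A] [IsLocalRing A] (I : Ideal A)
    [Nontrivial (A ⧸ I)] : IsLocalRing (A ⧸ I) :=
  .of_surjective' _ Ideal.Quotient.mk_surjective

namespace MvPowerSeries

theorem mem_span_X_pow_pair_iff {σ R : Type*} [CommRing R] {i j : σ} {m n : ℕ}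
    {f : MvPowerSeries σ R} :
    f ∈ Ideal.span {X i ^ m, X j ^ n} ↔ ∀ d : σ →₀ ℕ, d i < m → d j < n → coeff d f = 0 := by
  classical
  constructor
  · intro hf d hdi hdj
    obtain ⟨g, h, rfl⟩ := Ideal.mem_span_pair.mp hf
    rw [map_add, X_pow_dvd_iff.mp (dvd_mul_left _ g) d hdi,
      X_pow_dvd_iff.mp (dvd_mul_left _ h) d hdj, add_zero]
  · intro hf
    let f₁ : MvPowerSeries σ R := fun d => if m ≤ d i then coeff d f else 0
    have hf₁ : X i ^ m ∣ f₁ := X_pow_dvd_iff.mpr fun d hd => if_neg (by omega)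
    have hf₂ : X j ^ n ∣ f - f₁ := X_pow_dvd_iff.mpr fun d hd => by
      change coeff d f - (if m ≤ d i then coeff d f else 0) = 0
      split_ifs with hm
      · exact sub_self _
      · rw [hf d (by omega) hd, sub_zero]
    rw [Ideal.span_insert, Submodule.mem_sup]
    exact ⟨f₁, Ideal.mem_span_singleton.mpr hf₁, f - f₁, Ideal.mem_span_singleton.mpr hf₂,
      add_sub_cancel _ _⟩

section MonomialIdeal

variable {K : Type*} [Field K]

noncomputable def coeffBox (m n : ℕ) : MvPowerSeries (Fin 2) K →ₗ[K] (Fin m × Fin n → K) :=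
  LinearMap.pi fun p => coeff (Finsupp.single 0 (p.1 : ℕ) + Finsupp.single 1 (p.2 : ℕ))

theorem coeffBox_surjective (m n : ℕ) : Function.Surjective (coeffBox (K := K) m n) := by
  intro v
  let f : MvPowerSeries (Fin 2) K := fun d =>
    if h : d 0 < m ∧ d 1 < n then v (⟨d 0, h.1⟩, ⟨d 1, h.2⟩) else 0
  refine ⟨f, ?_⟩
  ext ⟨i, j⟩
  rw [coeffBox, LinearMap.pi_apply, coeff_apply]
  simp [f]

theorem ker_coeffBox (m n : ℕ) :
    LinearMap.ker (coeffBox (K := K) m n) =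
      (Ideal.span {(X 0 : MvPowerSeries (Fin 2) K) ^ m, X 1 ^ n}).restrictScalars K := by
  ext f
  simp only [Submodule.restrictScalars_mem, mem_span_X_pow_pair_iff, LinearMap.mem_ker, funext_iff,
    coeffBox, LinearMap.pi_apply, Pi.zero_apply, Prod.forall, Fin.forall_iff]
  constructor
  · intro h d hd0 hd1
    have hd : d = Finsupp.single 0 (d 0) + Finsupp.single 1 (d 1) := by
      ext k; fin_cases k <;> simp
    rw [hd]
    exact h _ hd0 _ hd1
  · intro h i hi j hj
    exact h _ (by simpa) (by simpa)

noncomputable def quotientSpanXPowPairEquiv (m n : ℕ) :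
    (MvPowerSeries (Fin 2) K ⧸ Ideal.span {(X 0 : MvPowerSeries (Fin 2) K) ^ m, X 1 ^ n}) ≃ₗ[K]
      (Fin m × Fin n → K) := by
  have e := (coeffBox (K := K) m n).quotKerEquivOfSurjective (coeffBox_surjective m n)
  exact (Submodule.Quotient.restrictScalarsEquiv K _).symm ≪≫ₗ
    (Submodule.quotEquivOfEq _ _ (ker_coeffBox m n)).symm ≪≫ₗ e

end MonomialIdeal

section Quotient

open IsLocalRing

variable {σ K : Type*} [Field K] (I : Ideal (MvPowerSeries σ K)) [Nontrivial (MvPowerSeries σ K ⧸ I)]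

theorem algebraMap_residueField_quotient_surjective :
    Function.Surjective
      (algebraMap (ResidueField K) (ResidueField (MvPowerSeries σ K ⧸ I))) := by
  have := IsLocalHom.of_surjective (Ideal.Quotient.mk I) Ideal.Quotient.mk_surjective
  intro r
  obtain ⟨s, rfl⟩ := residue_surjective r
  obtain ⟨f, rfl⟩ := Ideal.Quotient.mk_surjective s
  refine ⟨residue K (constantCoeff f), ?_⟩
  rw [ResidueField.algebraMap_residue, eq_comm, ← sub_eq_zero, ← map_sub, residue_eq_zero_iff,
    mem_maximalIdeal, mem_nonunits_iff, ← Ideal.Quotient.mk_algebraMap, ← map_sub]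
  intro hunit
  have := isUnit_constantCoeff _ (isUnit_of_map_unit _ _ hunit)
  simp [MvPowerSeries.algebraMap_apply] at this

theorem length_eq_length_quotient (M : Type*) [AddCommGroup M] [Module K M]
    [Module (MvPowerSeries σ K ⧸ I) M] [IsScalarTower K (MvPowerSeries σ K ⧸ I) M] :
    Module.length K M = Module.length (MvPowerSeries σ K ⧸ I) M := by
  rw [length_restrictScalars K (MvPowerSeries σ K ⧸ I) M,
    Module.length_eq_of_surjective (algebraMap_residueField_quotient_surjective I),
    Module.length_eq_one (ResidueField _) (ResidueField _), mul_one]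

end Quotient

end MvPowerSeries

namespace HypSurf

variable {a b : ℕ}

theorem x_pow_eq_y_pow :
    (Ideal.Quotient.mk _ (X 0) ^ a : HypSurf a b) = Ideal.Quotient.mk _ (X 1) ^ b := by
  rw [← map_pow, ← map_pow, Ideal.Quotient.mk_eq_mk_iff_sub_mem]
  exact Ideal.subset_span rfl

theorem nontrivial (ha : a ≠ 0) (hb : b ≠ 0) : Nontrivial (HypSurf a b) := by
  rw [Ideal.Quotient.nontrivial_iff, Ne, Ideal.span_singleton_eq_top, isUnit_iff_constantCoeff]
  simp [ha, hb]

noncomputable def quotientXPowPredEquiv (ha : a ≠ 0) :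
    (HypSurf a b ⧸ Ideal.span {(Ideal.Quotient.mk _ (X 0) ^ (a - 1) : HypSurf a b)}) ≃ₗ[ℂ]
      (Fin (a - 1) × Fin b → ℂ) := by
  have hmap : Ideal.span {(Ideal.Quotient.mk _ (X 0) ^ (a - 1) : HypSurf a b)} =
      (Ideal.span {(X 0 : MvPowerSeries (Fin 2) ℂ) ^ (a - 1)}).map (Ideal.Quotient.mkₐ ℂ _) := by
    rw [Ideal.map_span, Set.image_singleton, map_pow]; rfl
  exact (Ideal.quotientEquivAlgOfEq ℂ hmap).toLinearEquiv ≪≫ₗ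
    (DoubleQuot.quotQuotEquivQuotSupₐ ℂ _ _).toLinearEquiv ≪≫ₗ
    (Ideal.quotientEquivAlgOfEq ℂ (Ideal.span_pow_sub_pow_sup_span_pow_pred ha)).toLinearEquiv ≪≫ₗ
    quotientSpanXPowPairEquiv (a - 1) b

theorem span_pow_eq_span_x_pow_pred_mul (ha : a ≠ 0) (hab : a ≤ b) :
    Ideal.span {(Ideal.Quotient.mk _ (X 0) ^ (a - 1) : HypSurf a b),
        Ideal.Quotient.mk _ (X 1) ^ (b - 1)} ^ a =
      Ideal.span {(Ideal.Quotient.mk _ (X 0) ^ (a - 1) : HypSurf a b)} *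
        Ideal.span {Ideal.Quotient.mk _ (X 0) ^ (a - 1), Ideal.Quotient.mk _ (X 1) ^ (b - 1)} ^
          (a - 1) := by
  refine Ideal.span_pair_pow_eq_span_singleton_mul ha ?_
  rw [pow_pred_pow_eq_mul_of_pow_eq x_pow_eq_y_pow hab]
  exact Ideal.mul_mem_mul (Ideal.mem_span_singleton_self _)
    (Ideal.mul_mem_right _ _ (Ideal.pow_mem_pow (Ideal.subset_span (by simp)) _))

theorem length_quotient_x_pow_pred (ha : a ≠ 0) (hb : b ≠ 0) :
    Module.length (HypSurf a b)
      (HypSurf a b ⧸ Ideal.span {(Ideal.Quotient.mk _ (X 0) ^ (a - 1) : HypSurf a b)}) =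
      ((a - 1) * b : ℕ) := by
  have := nontrivial ha hb
  rw [← length_eq_length_quotient, (quotientXPowPredEquiv ha).length_eq, Module.length_eq_finrank,
    Module.finrank_fintype_fun_eq_card, Fintype.card_prod, Fintype.card_fin, Fintype.card_fin]

end HypSurf

/-- For `R = ℂ[[x,y]]/(x^a − y^b)` with `2 ≤ a ≤ b`, the Jacobian ideal
`J = (x^{a−1}, y^{b−1})` satisfies `J^a = x^{a-1}·J^{a-1}`, i.e. the parameter ideal
`Q = (x^{a−1})` is a reduction of `J`; consequently the Hilbert–Samuel multiplicity
`e(J)` equals `ℓ(R/Q) = (a−1)b`, where the length of a module is expressed as the Krull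
dimension of its lattice of submodules. -/
theorem stmt18 (a b : ℕ) (ha : 2 ≤ a) (hab : a ≤ b) (J Q : Ideal (HypSurf a b))
    (hJ : J = Ideal.span {Ideal.Quotient.mk _ (X 0) ^ (a - 1),
      Ideal.Quotient.mk _ (X 1) ^ (b - 1)})
    (hQ : Q = Ideal.span {Ideal.Quotient.mk _ (X 0) ^ (a - 1)}) :
    J ^ a = Q * J ^ (a - 1) ∧
      Order.krullDim (Submodule (HypSurf a b) (HypSurf a b ⧸ Q)) = ((a - 1) * b : ℕ) := by
  subst hJ hQ
  refine ⟨HypSurf.span_pow_eq_span_x_pow_pred_mul (by omega) hab, ?_⟩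
  rw [← Module.coe_length, HypSurf.length_quotient_x_pow_pred (by omega) (by omega)]
  rfl
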